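/- arXiv:math/0209127 — 2 statements merged into one kernel-verified Lean document; each statement's English description precedes it below -/
import Mathlib

section
/- For every integer m ≥ 1, 4 ∫_0^1 x^(1+2m)/(1+x^2)^2 dx = 2m·|ln 2 − ∑_{n=1}^{m−1} (−1)^(n−1)/n| − 1. -/
/-!
Let `R k = ∫₀¹ x^(2k+1) / (1 + x²)`. Then `R 0 = log 2 / 2` and
`R k + R (k+1) = ∫₀¹ x^(2k+1) = 1 / (2k+2)`, so `log 2 - ∑_{n ≤ k} (-1)^(n-1) / n = (-1)^k · 2 R k`,
whose absolute value is `2 R k` since `R k ≥ 0`. Integrating the derivative of `x^(2k+2) / (1 + x²)`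
over `[0, 1]` gives `1/2 = (2k+2) R k - 2 ∫₀¹ x^(2k+3) / (1 + x²)²`, the claim for `m = k + 1`.
-/

open intervalIntegral Real
open MeasureTheory (volume)

lemma intervalIntegrable_pow_div_one_add_sq_pow (n j : ℕ) (a b : ℝ) :
    IntervalIntegrable (fun x : ℝ => x ^ n / (1 + x ^ 2) ^ j) volume a b :=
  ((continuous_pow n).div (by fun_prop) fun x => by positivity).intervalIntegrable a b

noncomputable def oddMoment (k : ℕ) : ℝ := ∫ x in (0:ℝ)..1, x ^ (2 * k + 1) / (1 + x ^ 2)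

lemma oddMoment_nonneg (k : ℕ) : 0 ≤ oddMoment k :=
  integral_nonneg zero_le_one fun x hx => by have := pow_nonneg hx.1 (2 * k + 1); positivity

lemma oddMoment_zero : oddMoment 0 = log 2 / 2 := by
  have hderiv : ∀ x ∈ Set.uIcc (0:ℝ) 1,
      HasDerivAt (fun x : ℝ => log (1 + x ^ 2) / 2) (x ^ (2 * 0 + 1) / (1 + x ^ 2)) x := by
    intro x _
    have hpos : (0:ℝ) < 1 + x ^ 2 := by positivity
    refine ((((hasDerivAt_pow 2 x).const_add 1).log hpos.ne').div_const 2).congr_deriv ?_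
    field_simp
    ring
  rw [oddMoment, integral_eq_sub_of_hasDerivAt hderiv
    (by simpa using intervalIntegrable_pow_div_one_add_sq_pow 1 1 0 1)]
  norm_num

lemma oddMoment_add_oddMoment_succ (k : ℕ) :
    oddMoment k + oddMoment (k + 1) = 1 / (2 * k + 2) := by
  have hint (n : ℕ) : IntervalIntegrable (fun x : ℝ => x ^ n / (1 + x ^ 2)) volume 0 1 := by
    simpa using intervalIntegrable_pow_div_one_add_sq_pow n 1 0 1
  rw [oddMoment, oddMoment, ← integral_add (hint _) (hint _)]
  have hsum : ∀ x : ℝ, x ^ (2 * k + 1) / (1 + x ^ 2) + x ^ (2 * (k + 1) + 1) / (1 + x ^ 2)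
      = x ^ (2 * k + 1) := fun x => by
    field_simp
    ring
  simp_rw [hsum, integral_pow]
  push_cast
  ring

lemma log_two_sub_sum_alternating (k : ℕ) :
    log 2 - ∑ n ∈ Finset.Icc 1 k, (-1:ℝ) ^ (n - 1) / n = (-1) ^ k * (2 * oddMoment k) := by
  induction k with
  | zero => simp [oddMoment_zero]; ring
  | succ k ih =>
    rw [Finset.sum_Icc_succ_top (by omega), Nat.add_sub_cancel, ← sub_sub, ih,
      eq_sub_of_add_eq' (oddMoment_add_oddMoment_succ k)]
    push_cast
    field_simp
    ring

lemma four_mul_integral_pow_div_one_add_sq_sq (k : ℕ) :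
    4 * ∫ x in (0:ℝ)..1, x ^ (1 + 2 * (k + 1)) / (1 + x ^ 2) ^ 2 =
      4 * (k + 1) * oddMoment k - 1 := by
  have hderiv : ∀ x ∈ Set.uIcc (0:ℝ) 1,
      HasDerivAt (fun x : ℝ => x ^ (2 * k + 2) / (1 + x ^ 2))
        ((2 * k + 2) * (x ^ (2 * k + 1) / (1 + x ^ 2)) -
          2 * (x ^ (1 + 2 * (k + 1)) / (1 + x ^ 2) ^ 2)) x := by
    intro x _
    have hpos : (0:ℝ) < 1 + x ^ 2 := by positivity
    refine ((hasDerivAt_pow (2 * k + 2) x).div ((hasDerivAt_pow 2 x).const_add 1)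
      hpos.ne').congr_deriv ?_
    rw [show 2 * k + 2 - 1 = 2 * k + 1 by omega]
    push_cast
    field_simp
    ring
  have hint₁ : IntervalIntegrable (fun x : ℝ => (2 * k + 2) * (x ^ (2 * k + 1) / (1 + x ^ 2)))
      volume 0 1 := by
    simpa using (intervalIntegrable_pow_div_one_add_sq_pow (2 * k + 1) 1 0 1).const_mul _
  have hint₂ := (intervalIntegrable_pow_div_one_add_sq_pow (1 + 2 * (k + 1)) 2 0 1).const_mul 2
  have hftc := integral_eq_sub_of_hasDerivAt hderiv (hint₁.sub hint₂)
  rw [integral_sub hint₁ hint₂, integral_const_mul, integral_const_mul] at hftc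
  rw [oddMoment]
  norm_num at hftc
  linarith

theorem stmt_2 (m : ℕ) (hm : 1 ≤ m) :
    4 * ∫ x in (0:ℝ)..1, x^(1 + 2*m) / (1 + x^2)^2 =
      2 * m * |Real.log 2 - ∑ n ∈ Finset.Icc 1 (m-1), (-1:ℝ)^(n-1) / n| - 1 := by
  obtain ⟨k, rfl⟩ : ∃ k, m = k + 1 := ⟨m - 1, by omega⟩
  rw [four_mul_integral_pow_div_one_add_sq_sq, Nat.add_sub_cancel, log_two_sub_sum_alternating,
    abs_mul, abs_neg_one_pow, one_mul,
    abs_of_nonneg (mul_nonneg zero_le_two (oddMoment_nonneg k))]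
  push_cast
  ring
end

section
/- For real p > 2 and integer k with |k| ≥ 1, ∑_{M=0}^∞ (2M+1+|k|)^((1−p)/(p−2)) ≤ |k|^(−1/(p−2)) · (p−2)/2. -/
open Real Filter

/-- Midpoint convexity of `x ^ q` for `q < 0` on positives. -/
lemma aux_midpoint {q : ℝ} (hq : q < 0) {u v : ℝ} (hu : 0 < u) (hv : 0 < v) :
    2 * ((u + v) / 2) ^ q ≤ u ^ q + v ^ q := by
  have hsqrt : Real.sqrt (u * v) ≤ (u + v) / 2 := by
    rw [show (u + v) / 2 = Real.sqrt (((u + v) / 2) ^ 2) from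
      (Real.sqrt_sq (by positivity)).symm]
    exact Real.sqrt_le_sqrt (by nlinarith [sq_nonneg (u - v)])
  have hsqrtpos : 0 < Real.sqrt (u * v) := Real.sqrt_pos.2 (by positivity)
  have h1 : ((u + v) / 2) ^ q ≤ (Real.sqrt (u * v)) ^ q :=
    Real.rpow_le_rpow_of_nonpos hsqrtpos hsqrt hq.le
  have h2 : (Real.sqrt (u * v)) ^ q = u ^ (q / 2) * v ^ (q / 2) := by
    rw [Real.sqrt_eq_rpow, ← Real.rpow_mul (by positivity),
      Real.mul_rpow hu.le hv.le]
    ring_nf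
  have h3 : 2 * (u ^ (q / 2) * v ^ (q / 2)) ≤ u ^ q + v ^ q := by
    have := two_mul_le_add_sq (u ^ (q / 2)) (v ^ (q / 2))
    have eu : (u ^ (q / 2)) ^ 2 = u ^ q := by
      rw [← Real.rpow_natCast (u ^ (q / 2)) 2, ← Real.rpow_mul hu.le]
      norm_num
    have ev : (v ^ (q / 2)) ^ 2 = v ^ q := by
      rw [← Real.rpow_natCast (v ^ (q / 2)) 2, ← Real.rpow_mul hv.le]
      norm_num
    rw [eu, ev] at this
    linarith
  calc 2 * ((u + v) / 2) ^ q ≤ 2 * (Real.sqrt (u * v)) ^ q := by linarith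
    _ = 2 * (u ^ (q / 2) * v ^ (q / 2)) := by rw [h2]
    _ ≤ u ^ q + v ^ q := h3

/-- Hermite–Hadamard type bound for `x ^ b` with `b < 0`. -/
lemma aux_key {b : ℝ} (hb : b < 0) {y : ℝ} (hy : 0 < y) :
    2 * (-b) * (y + 1) ^ (b - 1) ≤ y ^ b - (y + 2) ^ b := by
  set m : ℝ := y + 1 with hm
  have hm1 : 1 < m := by simp [hm]; linarith
  set F : ℝ → ℝ := fun t => (m - t) ^ b - (m + t) ^ b + 2 * b * t * m ^ (b - 1)
    with hF
  have hderiv : ∀ t ∈ Set.Icc (0 : ℝ) 1,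
      HasDerivAt F
        (b * (m - t) ^ (b - 1) * (-1) - b * (m + t) ^ (b - 1) * 1
          + 2 * b * m ^ (b - 1)) t := by
    intro t ht
    have h1 : (0 : ℝ) < m - t := by
      have := ht.2; linarith
    have h2 : (0 : ℝ) < m + t := by
      have := ht.1; linarith
    have d1 : HasDerivAt (fun t : ℝ => (m - t) ^ b) (b * (m - t) ^ (b - 1) * (-1)) t := by
      have hsub : HasDerivAt (fun t : ℝ => m - t) (-1) t := by
        simpa using (hasDerivAt_id t).const_sub m
      have := hsub.rpow_const (p := b) (Or.inl h1.ne')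
      convert this using 1
      ring
    have d2 : HasDerivAt (fun t : ℝ => (m + t) ^ b) (b * (m + t) ^ (b - 1) * 1) t := by
      have hadd : HasDerivAt (fun t : ℝ => m + t) 1 t := by
        simpa using (hasDerivAt_id t).const_add m
      have := hadd.rpow_const (p := b) (Or.inl h2.ne')
      convert this using 1
      ring
    have d3 : HasDerivAt (fun t : ℝ => 2 * b * t * m ^ (b - 1))
        (2 * b * m ^ (b - 1)) t := by
      have : HasDerivAt (fun t : ℝ => t * (2 * b * m ^ (b - 1)))
          (2 * b * m ^ (b - 1)) t := by
        simpa using (hasDerivAt_id t).mul_const (2 * b * m ^ (b - 1))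
      convert this using 2 with t
      ring
    exact (d1.sub d2).add d3
  have hmono : MonotoneOn F (Set.Icc (0 : ℝ) 1) := by
    apply monotoneOn_of_deriv_nonneg (convex_Icc 0 1)
    · exact fun t ht => (hderiv t ht).differentiableAt.continuousAt.continuousWithinAt
    · intro t ht
      rw [interior_Icc] at ht
      exact ((hderiv t ⟨ht.1.le, ht.2.le⟩).differentiableAt).differentiableWithinAt
    · intro t ht
      rw [interior_Icc] at ht
      have ht' : t ∈ Set.Icc (0 : ℝ) 1 := ⟨ht.1.le, ht.2.le⟩
      rw [(hderiv t ht').deriv]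
      have h1 : (0 : ℝ) < m - t := by have := ht.2; linarith
      have h2 : (0 : ℝ) < m + t := by have := ht.1; linarith
      have hmid := aux_midpoint (q := b - 1) (by linarith) h1 h2
      have hmm : ((m - t) + (m + t)) / 2 = m := by ring
      rw [hmm] at hmid
      nlinarith [hmid, hb]
  have h01 := hmono (Set.mem_Icc.2 ⟨le_refl 0, zero_le_one⟩)
    (Set.mem_Icc.2 ⟨zero_le_one, le_refl 1⟩) zero_le_one
  have hF0 : F 0 = 0 := by simp [hF]
  have hF1 : F 1 = y ^ b - (y + 2) ^ b + 2 * b * (y + 1) ^ (b - 1) := by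
    simp only [hF, hm]
    ring_nf
  rw [hF0, hF1] at h01
  linarith

theorem stmt_13 (p : ℝ) (hp : 2 < p) (k : ℤ) (hk : 1 ≤ |k|) :
    ∑' M : ℕ, (2*(M:ℝ) + 1 + (|k| : ℝ)) ^ ((1-p)/(p-2)) ≤
      (|k| : ℝ) ^ (-1/(p-2)) * ((p-2)/2) := by
  have hp2 : (0 : ℝ) < p - 2 := by linarith
  set c : ℝ := (|k| : ℝ) with hc
  have hc1 : (1 : ℝ) ≤ c := by rw [hc]; exact_mod_cast hk
  have hc0 : (0 : ℝ) < c := by linarith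
  set b : ℝ := -1 / (p - 2) with hbdef
  have hb : b < 0 := by
    rw [hbdef]; exact div_neg_of_neg_of_pos (by norm_num) hp2
  have ha : (1 - p) / (p - 2) = b - 1 := by
    rw [hbdef]; field_simp; ring
  set h : ℕ → ℝ := fun M => (2 * (M : ℝ) + c) ^ b with hh
  set g : ℕ → ℝ := fun M => (p - 2) / 2 * (h M - h (M + 1)) with hg
  -- positivity of bases
  have hbase : ∀ M : ℕ, (0 : ℝ) < 2 * (M : ℝ) + c := by
    intro M
    have : (0 : ℝ) ≤ (M : ℝ) := Nat.cast_nonneg M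
    linarith
  -- termwise bound
  have hterm : ∀ M : ℕ, (2*(M:ℝ) + 1 + c) ^ ((1-p)/(p-2)) ≤ g M := by
    intro M
    have hkey := aux_key hb (hbase M)
    have e2 : 2 * (M : ℝ) + 1 + c = (2 * (M : ℝ) + c) + 1 := by ring
    have e3 : h (M + 1) = ((2 * (M : ℝ) + c) + 2) ^ b := by
      simp only [hh]
      push_cast
      ring_nf
    have e1 : (p - 2) / 2 * (2 * (-b)) = 1 := by
      rw [hbdef]; field_simp
    rw [ha, e2]
    calc ((2 * (M : ℝ) + c) + 1) ^ (b - 1)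
        = ((p - 2) / 2 * (2 * (-b))) * ((2 * (M : ℝ) + c) + 1) ^ (b - 1) := by
          rw [e1, one_mul]
      _ = (p - 2) / 2 * (2 * (-b) * ((2 * (M : ℝ) + c) + 1) ^ (b - 1)) := by ring
      _ ≤ (p - 2) / 2 * ((2 * (M : ℝ) + c) ^ b - ((2 * (M : ℝ) + c) + 2) ^ b) := by
          apply mul_le_mul_of_nonneg_left hkey
          positivity
      _ = g M := by simp only [hg]; rw [← e3]
  -- telescoping sum of g
  have hnn : ∀ M : ℕ, 0 ≤ h M - h (M + 1) := by
    intro M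
    have : h (M + 1) ≤ h M := by
      apply Real.rpow_le_rpow_of_nonpos (hbase M) _ hb.le
      push_cast; linarith
    linarith
  have hh0 : Tendsto h atTop (nhds 0) := by
    have h1 : Tendsto (fun M : ℕ => 2 * (M : ℝ) + c) atTop atTop := by
      apply tendsto_atTop_add_const_right
      exact (tendsto_natCast_atTop_atTop).const_mul_atTop (by norm_num)
    have h2 : Tendsto (fun x : ℝ => x ^ b) atTop (nhds 0) := by
      have := tendsto_rpow_neg_atTop (y := -b) (by linarith)
      simpa using this
    exact h2.comp h1
  have hsumtel : HasSum (fun M => h M - h (M + 1)) (h 0) := by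
    rw [hasSum_iff_tendsto_nat_of_nonneg hnn]
    have : (fun n : ℕ => ∑ i ∈ Finset.range n, (h i - h (i + 1)))
        = fun n : ℕ => h 0 - h n := by
      funext n
      exact Finset.sum_range_sub' h n
    rw [this]
    simpa using tendsto_const_nhds.sub hh0
  have hsumg : HasSum g ((p - 2) / 2 * h 0) := hsumtel.mul_left _
  -- summability of LHS
  have hfnn : ∀ M : ℕ, 0 ≤ (2*(M:ℝ) + 1 + c) ^ ((1-p)/(p-2)) := by
    intro M
    apply Real.rpow_nonneg
    have : (0 : ℝ) ≤ (M : ℝ) := Nat.cast_nonneg M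
    linarith
  have hfs : Summable (fun M : ℕ => (2*(M:ℝ) + 1 + c) ^ ((1-p)/(p-2))) :=
    Summable.of_nonneg_of_le hfnn hterm hsumg.summable
  have hle := Summable.tsum_le_tsum hterm hfs hsumg.summable
  rw [hsumg.tsum_eq] at hle
  have hh00 : h 0 = c ^ b := by simp [hh]
  rw [hh00] at hle
  calc ∑' M : ℕ, (2*(M:ℝ) + 1 + c) ^ ((1-p)/(p-2))
      ≤ (p - 2) / 2 * c ^ b := hle
    _ = c ^ (-1/(p-2)) * ((p-2)/2) := by rw [hbdef]; ring
end
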